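/- arXiv:0905.4135 — 4 statements merged into one kernel-verified Lean document; each statement's English description precedes it below -/
import Mathlib

section
/- Let g, h : ℕ → ℕ be positive sequences with g(N) + h(N) → ∞ and (g(N)+h(N))/N → 0 as N → ∞, set κ(N) = (g(N)+h(N))/N and λ(N) = (1 - g(N)/N)(1 - h(N)/N), and let m : ℕ → ℕ be a positive integer sequence. Then the sum S_m = Σ_{k=1}^{m(N)} (2k-1)·λ(N)^(k-1) satisfies S_m ~ (2/κ(N)²)·(1 - e^(-m(N)κ(N))·(m(N)κ(N) + 1)) as N → ∞, i.e., the ratio of the two sides tends to 1. -/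
/-!
Write `μ = -log λ`, so that `λ ^ k = exp (-μ k)`, and let
`J ν = ∫ t in 0..m, 2 t exp (-ν t) = 2 / ν² * (1 - exp (-m ν) * (m ν + 1))`.
On `[k, k + 1]` the integrand lies between `exp (-μ) * exp (-μ k) * 2t` and `exp (-μ k) * 2t`,
and `∫ t in k..k+1, 2t = 2k + 1`; hence `J μ ≤ S_m ≤ exp μ * J μ`.
Since `J` is antitone in `ν` while `ν² J ν` is monotone, `J μ / J κ` lies between
`min 1 ((κ/μ)²)` and `1 / min 1 ((μ/κ)²)`. Finally `1 - x⁻¹ ≤ log x ≤ x - 1` gives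
`κ (1 - κ/4) ≤ μ ≤ κ / (1 - κ)`, so `μ / κ → 1` and `μ → 0`, and all these bounds tend to `1`.
-/

open Filter Real intervalIntegral Topology

noncomputable def linExpIntegral (ν M : ℝ) : ℝ := ∫ t in (0 : ℝ)..M, 2 * t * exp (-(ν * t))

section LinExpIntegral

variable {ν ν' M M' : ℝ}

lemma continuous_linExp (ν : ℝ) : Continuous fun t : ℝ => 2 * t * exp (-(ν * t)) := by
  fun_prop

lemma hasDerivAt_linExp_primitive (hν : ν ≠ 0) (t : ℝ) :
    HasDerivAt (fun t => -(2 / ν ^ 2 * (exp (-(ν * t)) * (ν * t + 1))))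
      (2 * t * exp (-(ν * t))) t := by
  have hlin : HasDerivAt (fun t => ν * t) ν t := by simpa using (hasDerivAt_id t).const_mul ν
  refine ((hlin.neg.exp.mul (hlin.add_const 1)).const_mul (2 / ν ^ 2)).neg.congr_deriv ?_
  simp only [Pi.neg_apply]
  field_simp
  ring

lemma linExpIntegral_eq (hν : ν ≠ 0) (M : ℝ) :
    linExpIntegral ν M = 2 / ν ^ 2 * (1 - exp (-M * ν) * (M * ν + 1)) := by
  rw [linExpIntegral, integral_eq_sub_of_hasDerivAt (fun t _ => hasDerivAt_linExp_primitive hν t)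
    ((continuous_linExp ν).intervalIntegrable 0 M)]
  simp only [mul_zero, neg_zero, exp_zero, zero_add, mul_one]
  ring_nf

lemma sq_mul_linExpIntegral (hν : ν ≠ 0) (M : ℝ) :
    ν ^ 2 * linExpIntegral ν M = linExpIntegral 1 (M * ν) := by
  rw [linExpIntegral_eq hν, linExpIntegral_eq one_ne_zero]
  field_simp

lemma linExpIntegral_nonneg (hM : 0 ≤ M) : 0 ≤ linExpIntegral ν M :=
  integral_nonneg hM fun t ht => by have := ht.1; positivity

lemma linExpIntegral_pos (hM : 0 < M) : 0 < linExpIntegral ν M :=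
  intervalIntegral_pos_of_pos_on ((continuous_linExp ν).intervalIntegrable 0 M)
    (fun t ht => by have := ht.1; positivity) hM

lemma linExpIntegral_anti_left (hM : 0 ≤ M) (h : ν ≤ ν') :
    linExpIntegral ν' M ≤ linExpIntegral ν M := by
  refine integral_mono_on hM ((continuous_linExp ν').intervalIntegrable 0 M)
    ((continuous_linExp ν).intervalIntegrable 0 M) fun t ht => ?_
  have ht0 : 0 ≤ t := ht.1
  gcongr

lemma linExpIntegral_mono_right (hM : 0 ≤ M) (h : M ≤ M') :
    linExpIntegral ν M ≤ linExpIntegral ν M' :=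
  integral_mono_interval le_rfl hM h
    (MeasureTheory.ae_restrict_of_forall_mem measurableSet_Ioc fun t ht => by
      have := ht.1.le; positivity)
    ((continuous_linExp ν).intervalIntegrable 0 M')

lemma min_one_sq_div_mul_linExpIntegral_le (hν : 0 < ν) (hν' : 0 < ν') (hM : 0 ≤ M) :
    min 1 ((ν / ν') ^ 2) * linExpIntegral ν M ≤ linExpIntegral ν' M := by
  rcases le_total ν' ν with h | h
  · calc min 1 ((ν / ν') ^ 2) * linExpIntegral ν M ≤ 1 * linExpIntegral ν M := by
          gcongr
          · exact linExpIntegral_nonneg hM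
          · exact min_le_left _ _
      _ ≤ linExpIntegral ν' M := by rw [one_mul]; exact linExpIntegral_anti_left hM h
  · calc min 1 ((ν / ν') ^ 2) * linExpIntegral ν M ≤ (ν / ν') ^ 2 * linExpIntegral ν M := by
          gcongr
          · exact linExpIntegral_nonneg hM
          · exact min_le_right _ _
      _ = linExpIntegral 1 (M * ν) / ν' ^ 2 := by
          rw [← sq_mul_linExpIntegral hν.ne']; field_simp
      _ ≤ linExpIntegral 1 (M * ν') / ν' ^ 2 := by
          gcongr
          exact linExpIntegral_mono_right (by positivity) (by gcongr)
      _ = linExpIntegral ν' M := by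
          rw [← sq_mul_linExpIntegral hν'.ne']; field_simp

end LinExpIntegral

lemma exp_neg_pow_succ_le_exp_neg_mul {μ t : ℝ} (hμ : 0 ≤ μ) {k : ℕ} (ht : t ≤ k + 1) :
    exp (-μ) ^ (k + 1) ≤ exp (-(μ * t)) := by
  rw [← exp_nat_mul, exp_le_exp]
  push_cast
  nlinarith

lemma exp_neg_mul_le_exp_neg_pow {μ t : ℝ} (hμ : 0 ≤ μ) {k : ℕ} (ht : k ≤ t) :
    exp (-(μ * t)) ≤ exp (-μ) ^ k := by
  rw [← exp_nat_mul, exp_le_exp]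
  nlinarith

lemma integral_two_mul_nat_succ (k : ℕ) : ∫ t in (k : ℝ)..k + 1, 2 * t = 2 * k + 1 := by
  rw [integral_const_mul, integral_id]
  ring

lemma integral_linExp_nat_succ_le {μ : ℝ} (hμ : 0 ≤ μ) (k : ℕ) :
    ∫ t in (k : ℝ)..k + 1, 2 * t * exp (-(μ * t)) ≤ (2 * k + 1) * exp (-μ) ^ k := by
  rw [← integral_two_mul_nat_succ, ← integral_mul_const]
  refine integral_mono_on (by linarith) ((continuous_linExp μ).intervalIntegrable _ _)
    (Continuous.intervalIntegrable (by fun_prop) _ _) fun t ht => ?_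
  have ht0 : 0 ≤ t := (Nat.cast_nonneg k).trans ht.1
  gcongr
  exact exp_neg_mul_le_exp_neg_pow hμ ht.1

lemma le_integral_linExp_nat_succ {μ : ℝ} (hμ : 0 ≤ μ) (k : ℕ) :
    (2 * k + 1) * exp (-μ) ^ (k + 1) ≤ ∫ t in (k : ℝ)..k + 1, 2 * t * exp (-(μ * t)) := by
  rw [← integral_two_mul_nat_succ, ← integral_mul_const]
  refine integral_mono_on (by linarith) (Continuous.intervalIntegrable (by fun_prop) _ _)
    ((continuous_linExp μ).intervalIntegrable _ _) fun t ht => ?_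
  have ht0 : 0 ≤ t := (Nat.cast_nonneg k).trans ht.1
  gcongr
  exact exp_neg_pow_succ_le_exp_neg_mul hμ ht.2

lemma linExpIntegral_natCast_eq_sum (ν : ℝ) (m : ℕ) :
    linExpIntegral ν m = ∑ k ∈ Finset.range m, ∫ t in (k : ℝ)..k + 1, 2 * t * exp (-(ν * t)) := by
  have := sum_integral_adjacent_intervals (a := fun k : ℕ => (k : ℝ)) (n := m)
    (μ := MeasureTheory.volume) fun k _ => (continuous_linExp ν).intervalIntegrable _ _
  push_cast at this
  rw [linExpIntegral, ← this]

lemma linExpIntegral_le_sum {μ : ℝ} (hμ : 0 ≤ μ) (m : ℕ) :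
    linExpIntegral μ m ≤ ∑ k ∈ Finset.range m, (2 * k + 1) * exp (-μ) ^ k := by
  rw [linExpIntegral_natCast_eq_sum]
  exact Finset.sum_le_sum fun k _ => integral_linExp_nat_succ_le hμ k

lemma sum_le_exp_mul_linExpIntegral {μ : ℝ} (hμ : 0 ≤ μ) (m : ℕ) :
    ∑ k ∈ Finset.range m, (2 * k + 1) * exp (-μ) ^ k ≤ exp μ * linExpIntegral μ m := by
  rw [linExpIntegral_natCast_eq_sum, Finset.mul_sum]
  refine Finset.sum_le_sum fun k _ => ?_
  calc (2 * k + 1) * exp (-μ) ^ k = exp μ * ((2 * k + 1) * exp (-μ) ^ (k + 1)) := by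
        rw [pow_succ, exp_neg]; field_simp
    _ ≤ _ := by gcongr; exact le_integral_linExp_nat_succ hμ k

lemma min_one_sq_div_le_sum_div_linExpIntegral {κ μ : ℝ} (hκ : 0 < κ) (hμ : 0 < μ) {m : ℕ}
    (hm : 0 < m) :
    min 1 ((κ / μ) ^ 2) ≤
      (∑ k ∈ Finset.range m, (2 * k + 1) * exp (-μ) ^ k) / linExpIntegral κ m := by
  rw [le_div_iff₀ (linExpIntegral_pos (by exact_mod_cast hm))]
  exact (min_one_sq_div_mul_linExpIntegral_le hκ hμ m.cast_nonneg).trans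
    (linExpIntegral_le_sum hμ.le m)

lemma sum_div_linExpIntegral_le_exp_div_min_one_sq {κ μ : ℝ} (hκ : 0 < κ) (hμ : 0 < μ) {m : ℕ}
    (hm : 0 < m) :
    (∑ k ∈ Finset.range m, (2 * k + 1) * exp (-μ) ^ k) / linExpIntegral κ m ≤
      exp μ / min 1 ((μ / κ) ^ 2) := by
  have hc : 0 < min 1 ((μ / κ) ^ 2) := lt_min one_pos (by positivity)
  rw [div_le_div_iff₀ (linExpIntegral_pos (by exact_mod_cast hm)) hc]
  calc (∑ k ∈ Finset.range m, (2 * k + 1) * exp (-μ) ^ k) * min 1 ((μ / κ) ^ 2)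
      ≤ exp μ * linExpIntegral μ m * min 1 ((μ / κ) ^ 2) := by
        gcongr; exact sum_le_exp_mul_linExpIntegral hμ.le m
    _ ≤ exp μ * linExpIntegral κ m := by
        rw [mul_assoc, mul_comm (linExpIntegral μ m)]
        gcongr
        exact min_one_sq_div_mul_linExpIntegral_le hμ hκ m.cast_nonneg

lemma neg_log_one_sub_mul_one_sub_mem_Icc {a b : ℝ} (ha : 0 ≤ a) (hb : 0 ≤ b) (hab : a + b < 1) :
    -log ((1 - a) * (1 - b)) ∈ Set.Icc ((a + b) * (1 - (a + b) / 4)) ((a + b) / (1 - (a + b))) := by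
  have hprod : 0 < (1 - a) * (1 - b) := mul_pos (by linarith) (by linarith)
  have hprod_ge : 1 - (a + b) ≤ (1 - a) * (1 - b) := by nlinarith
  constructor
  · nlinarith [log_le_sub_one_of_pos hprod, sq_nonneg (a - b)]
  · have := one_sub_inv_le_log_of_pos hprod
    calc -log ((1 - a) * (1 - b)) ≤ ((1 - a) * (1 - b))⁻¹ - 1 := by linarith
      _ = (a + b - a * b) / ((1 - a) * (1 - b)) := by
        rw [eq_div_iff hprod.ne', sub_mul, inv_mul_cancel₀ hprod.ne']; ring
      _ ≤ (a + b) / (1 - (a + b)) := by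
        gcongr
        nlinarith

lemma tendsto_neg_log_one_sub_mul_one_sub_div_add {α : Type*} {l : Filter α} {a b : α → ℝ}
    (ha : ∀ᶠ x in l, 0 ≤ a x) (hb : ∀ᶠ x in l, 0 ≤ b x) (hab : ∀ᶠ x in l, 0 < a x + b x)
    (hlim : Tendsto (fun x => a x + b x) l (𝓝 0)) :
    Tendsto (fun x => -log ((1 - a x) * (1 - b x)) / (a x + b x)) l (𝓝 1) := by
  have hlower : Tendsto (fun x => 1 - (a x + b x) / 4) l (𝓝 1) := by
    simpa using tendsto_const_nhds.sub (hlim.div_const 4)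
  have hupper : Tendsto (fun x => 1 / (1 - (a x + b x))) l (𝓝 1) := by
    simpa using (tendsto_const_nhds.sub hlim).inv₀ (by norm_num : (1 : ℝ) - 0 ≠ 0)
  refine tendsto_of_tendsto_of_tendsto_of_le_of_le' hlower hupper ?_ ?_ <;>
  filter_upwards [ha, hb, hab, hlim.eventually_lt_const one_pos] with x hax hbx hpos hlt
  · rw [le_div_iff₀ hpos, mul_comm]
    exact (neg_log_one_sub_mul_one_sub_mem_Icc hax hbx hlt).1
  · rw [div_le_iff₀ hpos, one_div_mul_eq_div]
    exact (neg_log_one_sub_mul_one_sub_mem_Icc hax hbx hlt).2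

lemma tendsto_sum_div_linExpIntegral {α : Type*} {l : Filter α} {κ μ : α → ℝ} {m : α → ℕ}
    (hm : ∀ᶠ x in l, 0 < m x) (hκ_pos : ∀ᶠ x in l, 0 < κ x) (hκ : Tendsto κ l (𝓝 0))
    (hr : Tendsto (fun x => μ x / κ x) l (𝓝 1)) :
    Tendsto (fun x => (∑ k ∈ Finset.range (m x), (2 * k + 1) * exp (-μ x) ^ k) /
      linExpIntegral (κ x) (m x)) l (𝓝 1) := by
  have hμ : Tendsto μ l (𝓝 0) := by
    refine (one_mul (0 : ℝ) ▸ hr.mul hκ).congr' ?_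
    filter_upwards [hκ_pos] with x hx using div_mul_cancel₀ _ hx.ne'
  have hμ_pos : ∀ᶠ x in l, 0 < μ x := by
    filter_upwards [hκ_pos, hr.eventually_const_lt one_pos] with x hκx hrx
    exact (div_pos_iff_of_pos_right hκx).1 hrx
  have hlower : Tendsto (fun x => min 1 ((κ x / μ x) ^ 2)) l (𝓝 1) := by
    simpa [inv_div] using (tendsto_const_nhds (x := (1 : ℝ))).min ((hr.inv₀ one_ne_zero).pow 2)
  have hupper : Tendsto (fun x => exp (μ x) / min 1 ((μ x / κ x) ^ 2)) l (𝓝 1) := by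
    convert hμ.rexp.div ((tendsto_const_nhds (x := (1 : ℝ))).min (hr.pow 2)) (by simp)
      using 2 <;> simp
  refine tendsto_of_tendsto_of_tendsto_of_le_of_le' hlower hupper ?_ ?_ <;>
  filter_upwards [hm, hκ_pos, hμ_pos] with x hmx hκx hμx
  · exact min_one_sq_div_le_sum_div_linExpIntegral hκx hμx hmx
  · exact sum_div_linExpIntegral_le_exp_div_min_one_sq hκx hμx hmx

theorem arithmetico_geometric_asymptotics_general (g h m : ℕ → ℕ)
    (hm : ∀ N, 0 < m N)
    (h1 : Tendsto (fun N : ℕ => (g N + h N : ℝ)) atTop atTop)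
    (h2 : Tendsto (fun N : ℕ => (g N + h N : ℝ) / N) atTop (nhds 0)) :
    Tendsto
      (fun N : ℕ =>
        (∑ k ∈ Finset.range (m N),
            (2 * ((k : ℝ) + 1) - 1) *
              ((1 - (g N : ℝ) / N) * (1 - (h N : ℝ) / N)) ^ k) /
          ((2 / ((g N + h N : ℝ) / N) ^ 2) *
            (1 - Real.exp (-(m N : ℝ) * ((g N + h N : ℝ) / N)) *
              ((m N : ℝ) * ((g N + h N : ℝ) / N) + 1))))
      atTop (nhds 1) := by
  set κ : ℕ → ℝ := fun N => (g N + h N : ℝ) / N with hκ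
  have hκ_eq : κ = fun N => (g N : ℝ) / N + (h N : ℝ) / N := by simp only [hκ, add_div]
  have hκ_pos : ∀ᶠ N in atTop, 0 < κ N := by
    filter_upwards [h1.eventually_gt_atTop 0, eventually_gt_atTop 0] with N hgh hN
    exact div_pos hgh (Nat.cast_pos.2 hN)
  have hr : Tendsto (fun N => -log ((1 - (g N : ℝ) / N) * (1 - (h N : ℝ) / N)) / κ N) atTop
      (𝓝 1) := by
    rw [hκ_eq] at hκ_pos h2 ⊢
    exact tendsto_neg_log_one_sub_mul_one_sub_div_add (.of_forall fun N => by positivity)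
      (.of_forall fun N => by positivity) hκ_pos h2
  refine (tendsto_sum_div_linExpIntegral (.of_forall hm) hκ_pos h2 hr).congr' ?_
  filter_upwards [hκ_pos, h2.eventually_lt_const one_pos] with N hκN hκN_lt
  have hg_le : (g N : ℝ) / N ≤ κ N := by rw [hκ_eq]; simp only [le_add_iff_nonneg_right]; positivity
  have hh_le : (h N : ℝ) / N ≤ κ N := by rw [hκ_eq]; simp only [le_add_iff_nonneg_left]; positivity
  have hprod : 0 < (1 - (g N : ℝ) / N) * (1 - (h N : ℝ) / N) := mul_pos (by linarith) (by linarith)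
  simp only [neg_neg, exp_log hprod, linExpIntegral_eq hκN.ne']
  congr 1
  exact Finset.sum_congr rfl fun k _ => by ring

/-- Lemma: asymptotics of the arithmetico-geometric sum `S_m = Σ_{k=1}^{m}(2k-1)λ^{k-1}`
with `λ(N) = (1 - g/N)(1 - h/N)` and `κ(N) = (g+h)/N`:
`S_m ~ (2/κ²)(1 - e^{-mκ}(mκ+1))` as `N → ∞`. -/
theorem arithmetico_geometric_asymptotics (g h m : ℕ → ℕ)
    (hg : ∀ N, 0 < g N) (hh : ∀ N, 0 < h N) (hm : ∀ N, 0 < m N)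
    (h1 : Tendsto (fun N : ℕ => (g N + h N : ℝ)) atTop atTop)
    (h2 : Tendsto (fun N : ℕ => (g N + h N : ℝ) / N) atTop (nhds 0)) :
    Tendsto
      (fun N : ℕ =>
        (∑ k ∈ Finset.range (m N),
            (2 * ((k : ℝ) + 1) - 1) *
              ((1 - (g N : ℝ) / N) * (1 - (h N : ℝ) / N)) ^ k) /
          ((2 / ((g N + h N : ℝ) / N) ^ 2) *
            (1 - Real.exp (-(m N : ℝ) * ((g N + h N : ℝ) / N)) *
              ((m N : ℝ) * ((g N + h N : ℝ) / N) + 1))))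
      atTop (nhds 1) :=
  arithmetico_geometric_asymptotics_general g h m hm h1 h2
end

section
/- Suppose 1 ≤ g, h ≤ N, N - g and N - h are even, and 2k - 1 ≤ min(N-g, N-h) + 1. Then the ratio #E(g-1, h-1, N-2k+1)/#E(g,h,N) equals gh/N² when k = 1, and equals (gh / (N·(N-1)···(N-2k+2))²) · Π_{j=0}^{k-2} (N-g-2j)(N-h-2j) when k > 1. -/
/-!
An involution of `Fin N` with `g` fixed points is exactly a permutation of cycle type
`2^r` with `N = g + 2r`, so these involutions form one conjugacy class, of size
`N! / (g! 2^r r!)` (the order of the centralizer is `g! 2^r r!`). `E(g,h,N)` is the product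
of two such classes, so the ratio splits into one ratio of class sizes for `g` and one for `h`.
Passing from `(g, N)` to `(g - 1, N - 2k + 1)` removes one fixed point and `k - 1` two-cycles,
so each of these ratios is `g 2^(k-1) r(r-1)⋯(r-k+2) / N(N-1)⋯(N-2k+2)`, and
`2^(k-1) r(r-1)⋯(r-k+2) = ∏_{j<k-1} (N-g-2j)`.
-/

/-- The number of fixed points of a permutation of `Fin N`. -/
noncomputable def fixCard {N : ℕ} (σ : Equiv.Perm (Fin N)) : ℕ :=
  Nat.card {x : Fin N // σ x = x}

/-- The set of ordered pairs `(G, H)` of involutions of an `N`-element set with exactly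
`g` and `h` fixed points respectively. -/
def pairE (g h N : ℕ) : Set (Equiv.Perm (Fin N) × Equiv.Perm (Fin N)) :=
  {p | p.1 * p.1 = 1 ∧ p.2 * p.2 = 1 ∧ fixCard p.1 = g ∧ fixCard p.2 = h}

open Equiv Equiv.Perm Finset Nat

def involutionsWithFixCard (N g : ℕ) : Set (Perm (Fin N)) := {σ | σ * σ = 1 ∧ fixCard σ = g}

theorem fixCard_eq_sub_sum_cycleType {N : ℕ} (σ : Perm (Fin N)) :
    fixCard σ = N - σ.cycleType.sum := by
  have h := card_fixedPoints σ
  rw [Fintype.card_fin] at h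
  rw [fixCard, Nat.card_eq_fintype_card, ← h]
  rfl

theorem mem_involutionsWithFixCard_iff {N g r : ℕ} (hN : N = g + 2 * r) (σ : Perm (Fin N)) :
    σ ∈ involutionsWithFixCard N g ↔ σ.cycleType = Multiset.replicate r 2 := by
  have hle := σ.sum_cycleType_le
  rw [Fintype.card_fin] at hle
  rw [involutionsWithFixCard, Set.mem_ofPred_eq, ← sq, pow_prime_eq_one_iff,
    fixCard_eq_sub_sum_cycleType]
  constructor
  · rintro ⟨htwo, hfix⟩
    have hrep := Multiset.eq_replicate_card.mpr htwo
    rw [hrep] at hfix ⊢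
    rw [Multiset.sum_replicate, smul_eq_mul] at hfix
    congr 1
    rw [hrep, Multiset.sum_replicate, smul_eq_mul] at hle
    omega
  · intro h
    refine ⟨fun c hc => ?_, ?_⟩
    · rw [h] at hc
      exact Multiset.eq_of_mem_replicate hc
    · rw [h, Multiset.sum_replicate, smul_eq_mul]
      omega

theorem card_involutionsWithFixCard_mul {N g r : ℕ} (hN : N = g + 2 * r) :
    Nat.card (involutionsWithFixCard N g) * (g ! * 2 ^ r * r !) = N ! := by
  have key := card_of_cycleType_mul_eq (α := Fin N) (Multiset.replicate r 2)
  have hset : involutionsWithFixCard N g =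
      ↑({σ | σ.cycleType = Multiset.replicate r 2} : Finset (Perm (Fin N))) := by
    ext σ
    simp [mem_involutionsWithFixCard_iff hN]
  rw [hset, Nat.card_coe_set_eq, Set.ncard_coe_finset]
  have hcond : (Multiset.replicate r 2).sum ≤ Fintype.card (Fin N) ∧
      ∀ a ∈ Multiset.replicate r 2, 2 ≤ a := by
    refine ⟨by simp [hN, mul_comm r 2], fun a ha => (Multiset.eq_of_mem_replicate ha).ge⟩
  rw [if_pos hcond] at key
  rcases Nat.eq_zero_or_pos r with rfl | hr
  · simpa [hN] using key
  · simpa [hN, Multiset.toFinset_replicate, hr.ne', mul_comm r 2] using key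

theorem two_pow_mul_descFactorial_eq_prod (r k : ℕ) (hk : k ≤ r) :
    (2 : ℝ) ^ k * r.descFactorial k = ∏ j ∈ range k, (2 * (r : ℝ) - 2 * j) := by
  have hfactor : ∀ j ∈ range k, 2 * (r : ℝ) - 2 * j = 2 * ((r - j : ℕ) : ℝ) := by
    intro j hj
    rw [Nat.cast_sub (by rw [mem_range] at hj; omega)]
    ring
  rw [prod_congr rfl hfactor, prod_mul_distrib, prod_const, card_range,
    Nat.descFactorial_eq_prod_range, Nat.cast_prod]

theorem card_involutionsWithFixCard_ratio {N g r k : ℕ} (hg : 1 ≤ g) (hN : N = g + 2 * r)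
    (hk : k ≤ r) :
    (Nat.card (involutionsWithFixCard (N - (2 * k + 1)) (g - 1)) : ℝ) /
        Nat.card (involutionsWithFixCard N g) =
      g * (∏ j ∈ range k, ((N : ℝ) - g - 2 * j)) / N.descFactorial (2 * k + 1) := by
  obtain ⟨g, rfl⟩ : ∃ g', g = g' + 1 := ⟨g - 1, by omega⟩
  obtain ⟨s, rfl⟩ : ∃ s, r = k + s := ⟨r - k, by omega⟩
  have hN' : N - (2 * k + 1) = g + 2 * s := by omega
  have hsmall := card_involutionsWithFixCard_mul hN'
  have hbig := card_involutionsWithFixCard_mul hN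
  rw [hN'] at hsmall ⊢
  have hfact : N ! = N.descFactorial (2 * k + 1) * (g + 2 * s)! := by
    rw [← Nat.factorial_mul_descFactorial (show 2 * k + 1 ≤ N by omega), hN', mul_comm]
  have hr : (k + s)! = (k + s).descFactorial k * s ! := by
    rw [← Nat.factorial_mul_descFactorial (show k ≤ k + s by omega), Nat.add_sub_cancel_left,
      mul_comm]
  have hprod : ∏ j ∈ range k, ((N : ℝ) - ↑(g + 1) - 2 * j) =
      2 ^ k * ((k + s).descFactorial k : ℝ) := by
    rw [two_pow_mul_descFactorial_eq_prod _ _ (by omega)]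
    refine prod_congr rfl fun j _ => ?_
    rw [hN]
    push_cast
    ring
  have hbig0 : (Nat.card (involutionsWithFixCard N (g + 1)) : ℝ) ≠ 0 :=
    Nat.cast_ne_zero.mpr (left_ne_zero_of_mul (hbig ▸ N.factorial_ne_zero))
  rw [hfact, Nat.factorial_succ, hr, pow_add] at hbig
  have hD : (N.descFactorial (2 * k + 1) : ℝ) ≠ 0 := by
    exact_mod_cast (Nat.descFactorial_pos.mpr (by omega)).ne'
  rw [hprod, div_eq_div_iff hbig0 hD]
  have hX : ((g ! * 2 ^ s * s ! : ℕ) : ℝ) ≠ 0 := by positivity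
  apply mul_right_cancel₀ hX
  have hsmallR := congrArg (Nat.cast (R := ℝ)) hsmall
  have hbigR := congrArg (Nat.cast (R := ℝ)) hbig
  push_cast at hsmallR hbigR ⊢
  linear_combination (N.descFactorial (2 * k + 1) : ℝ) * hsmallR - hbigR

theorem pairE_eq_prod (g h N : ℕ) :
    pairE g h N = involutionsWithFixCard N g ×ˢ involutionsWithFixCard N h := by
  ext p
  simp only [pairE, involutionsWithFixCard, Set.mem_prod, Set.mem_ofPred_eq]
  tauto

theorem card_pairE (g h N : ℕ) :
    Nat.card (pairE g h N) =
      Nat.card (involutionsWithFixCard N g) * Nat.card (involutionsWithFixCard N h) := by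
  rw [pairE_eq_prod, Nat.card_congr (Equiv.Set.prod _ _), Nat.card_prod]

/-- The ratio `#E(g-1,h-1,N-2k+1)/#E(g,h,N)` equals `gh/N²` for `k = 1`, and
`(gh/(N^{2k-1 falling})²)·Π_{j=0}^{k-2}(N-g-2j)(N-h-2j)` for `k > 1`. -/
theorem pairE_ratio (g h N k : ℕ)
    (hg1 : 1 ≤ g) (hgN : g ≤ N) (hh1 : 1 ≤ h) (hhN : h ≤ N)
    (heg : Even (N - g)) (heh : Even (N - h)) (hk : 1 ≤ k)
    (hkN : 2 * k - 1 ≤ min (N - g) (N - h) + 1) :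
    (Nat.card (pairE (g - 1) (h - 1) (N - (2 * k - 1))) : ℝ) /
        (Nat.card (pairE g h N) : ℝ) =
      if k = 1 then (g : ℝ) * h / (N : ℝ) ^ 2
      else
        (g : ℝ) * h / ((N.descFactorial (2 * k - 1) : ℝ)) ^ 2 *
          ∏ j ∈ Finset.range (k - 1),
            ((N : ℝ) - g - 2 * j) * ((N : ℝ) - h - 2 * j) := by
  obtain ⟨r, hr⟩ := heg
  obtain ⟨s, hs⟩ := heh
  have hk' : 2 * k - 1 = 2 * (k - 1) + 1 := by omega
  have hratio : (Nat.card (pairE (g - 1) (h - 1) (N - (2 * k - 1))) : ℝ) /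
      Nat.card (pairE g h N) = (g : ℝ) * h / (N.descFactorial (2 * k - 1) : ℝ) ^ 2 *
        ∏ j ∈ range (k - 1), ((N : ℝ) - g - 2 * j) * ((N : ℝ) - h - 2 * j) := by
    rw [card_pairE, card_pairE, Nat.cast_mul, Nat.cast_mul, mul_div_mul_comm, hk',
      card_involutionsWithFixCard_ratio (r := r) hg1 (by omega) (by omega),
      card_involutionsWithFixCard_ratio (r := s) hh1 (by omega) (by omega), prod_mul_distrib]
    ring
  rw [hratio]
  split_ifs with hk1
  · subst hk1
    simp
  · rfl
end

section
/- Let G, H be involutions of a finite set and L = H ∘ G. If γ is a cycle of L that is not invariant under G (an asymmetric cycle), then G(γ) is another cycle of L, disjoint from γ, of the same length; moreover G(γ) is a cycle of L traversed in reverse. Hence asymmetric cycles of L come in pairs of equal length. -/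
/-- If `γ` is a cycle of `L = H ∘ G` not invariant under `G`, then `G(γ)` is another
cycle of `L`, disjoint from `γ`, of the same length; moreover `G(γ)` is traversed in
reverse (`G ∘ L = L⁻¹ ∘ G`). Hence asymmetric cycles come in pairs of equal length. -/
theorem asymmetric_cycles_in_pairs {Ω : Type*} [Fintype Ω] (G H : Equiv.Perm Ω)
    (hG : G * G = 1) (hH : H * H = 1) (a : Ω)
    (hasym : ⇑G '' {y | ∃ n : ℕ, ((H * G) ^ n) a = y} ≠
      {y | ∃ n : ℕ, ((H * G) ^ n) a = y}) :
    (∃ b, ⇑G '' {y | ∃ n : ℕ, ((H * G) ^ n) a = y} =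
        {y | ∃ n : ℕ, ((H * G) ^ n) b = y}) ∧
    Disjoint (⇑G '' {y | ∃ n : ℕ, ((H * G) ^ n) a = y})
        {y | ∃ n : ℕ, ((H * G) ^ n) a = y} ∧
    Nat.card (⇑G '' {y | ∃ n : ℕ, ((H * G) ^ n) a = y} : Set Ω) =
        Nat.card {y | ∃ n : ℕ, ((H * G) ^ n) a = y} ∧
    ∀ x : Ω, G ((H * G) x) = (H * G)⁻¹ (G x) := by
  set L := H * G with hL
  have hGi : G⁻¹ = G := inv_eq_of_mul_eq_one_right hG
  have hHi : H⁻¹ = H := inv_eq_of_mul_eq_one_right hH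
  have hLinv : L⁻¹ = G * H := by rw [hL, mul_inv_rev, hGi, hHi]
  have hconj : G * L * G⁻¹ = L⁻¹ := by
    rw [hGi, hLinv, hL]
    calc G * (H * G) * G = G * H * (G * G) := by group
    _ = G * H := by rw [hG, mul_one]
  have m := orderOf L
  have hmpos : 0 < orderOf L := orderOf_pos L
  set m := orderOf L
  have hLm : L ^ m = 1 := pow_orderOf_eq_one L
  have hLi : L⁻¹ = L ^ (m - 1) := by
    have : L * L ^ (m - 1) = 1 := by
      rw [← pow_succ', Nat.sub_add_cancel hmpos, hLm]
    exact inv_eq_of_mul_eq_one_right this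
  have key : ∀ n : ℕ, G * L ^ n * G = L ^ ((m - 1) * n) := by
    intro n
    have := conj_pow (a := G) (b := L) (i := n)
    rw [hGi] at this
    have hc : G * L * G = L⁻¹ := by rw [← hconj, hGi]
    rw [← this, hc, hLi, ← pow_mul]
  have key2 : ∀ n : ℕ, G * L ^ n = L ^ ((m - 1) * n) * G := by
    intro n
    have := key n
    calc G * L ^ n = (G * L ^ n * G) * G := by
          rw [mul_assoc, hG, mul_one]
    _ = L ^ ((m - 1) * n) * G := by rw [this]
  have key3 : ∀ n : ℕ, L ^ n * G = G * L ^ ((m - 1) * n) := by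
    intro n
    calc L ^ n * G = G * (G * L ^ n * G) := by
          rw [← mul_assoc, ← mul_assoc, hG, one_mul]
    _ = G * L ^ ((m - 1) * n) := by rw [key n, ]
  -- orbit shifting
  have orbitshift : ∀ (x : Ω) (k : ℕ),
      {y | ∃ n : ℕ, (L ^ n) ((L ^ k) x) = y} = {y | ∃ n : ℕ, (L ^ n) x = y} := by
    intro x k
    ext y
    constructor
    · rintro ⟨n, rfl⟩
      exact ⟨n + k, by rw [pow_add, Equiv.Perm.mul_apply]⟩
    · rintro ⟨n, rfl⟩
      refine ⟨n + (m - 1) * k, ?_⟩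
      have : L ^ (n + (m - 1) * k) * L ^ k = L ^ n := by
        rw [← pow_add]
        have : n + (m - 1) * k + k = n + m * k := by
          have h1 : (m - 1) * k + k = m * k := by
            have := Nat.succ_pred_eq_of_pos hmpos
            calc (m - 1) * k + k = ((m - 1) + 1) * k := by ring
            _ = m * k := by rw [Nat.sub_add_cancel hmpos]
          omega
        rw [this, pow_add, pow_mul, hLm, one_pow, mul_one]
      calc (L ^ (n + (m - 1) * k)) ((L ^ k) x)
          = (L ^ (n + (m - 1) * k) * L ^ k) x := rfl
      _ = (L ^ n) x := by rw [this]
  have himg : ⇑G '' {y | ∃ n : ℕ, (L ^ n) a = y} = {y | ∃ n : ℕ, (L ^ n) (G a) = y} := by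
    ext y
    constructor
    · rintro ⟨x, ⟨n, rfl⟩, rfl⟩
      refine ⟨(m - 1) * n, ?_⟩
      calc (L ^ ((m - 1) * n)) (G a) = (L ^ ((m - 1) * n) * G) a := rfl
      _ = (G * L ^ n) a := by rw [← key2]
      _ = G ((L ^ n) a) := rfl
    · rintro ⟨n, rfl⟩
      refine ⟨(L ^ ((m - 1) * n)) a, ⟨(m - 1) * n, rfl⟩, ?_⟩
      calc G ((L ^ ((m - 1) * n)) a) = (G * L ^ ((m - 1) * n)) a := rfl
      _ = (L ^ n * G) a := by rw [key3]
      _ = (L ^ n) (G a) := rfl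
  refine ⟨⟨G a, himg⟩, ?_, ?_, ?_⟩
  · rw [Set.disjoint_left]
    rintro y hy1 hy2
    apply hasym
    rw [himg] at hy1 ⊢
    obtain ⟨i, hi⟩ := hy1
    obtain ⟨j, hj⟩ := hy2
    -- G a = L^((m-1)*i) (L^j a)
    have hGa : G a = (L ^ ((m - 1) * i)) ((L ^ j) a) := by
      have : (L ^ ((m - 1) * i)) ((L ^ i) (G a)) = G a := by
        have : L ^ ((m - 1) * i) * L ^ i = 1 := by
          rw [← pow_add]
          have : (m - 1) * i + i = m * i := by
            have := Nat.sub_add_cancel hmpos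
            nlinarith [Nat.sub_add_cancel hmpos]
          rw [this, pow_mul, hLm, one_pow]
        calc (L ^ ((m - 1) * i)) ((L ^ i) (G a)) = (L ^ ((m - 1) * i) * L ^ i) (G a) := rfl
        _ = G a := by rw [this]; rfl
      rw [← this, hi, hj]
    calc {y | ∃ n : ℕ, (L ^ n) (G a) = y}
        = {y | ∃ n : ℕ, (L ^ n) ((L ^ ((m - 1) * i)) ((L ^ j) a)) = y} := by rw [← hGa]
    _ = {y | ∃ n : ℕ, (L ^ n) ((L ^ j) a) = y} := orbitshift _ _
    _ = {y | ∃ n : ℕ, (L ^ n) a = y} := orbitshift _ _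
  · exact Nat.card_image_of_injective G.injective _
  · intro x
    have : G * L = L⁻¹ * G := by
      rw [← hconj, hGi, mul_assoc, hG, mul_one]
    calc G ((H * G) x) = (G * L) x := rfl
    _ = (L⁻¹ * G) x := by rw [this]
    _ = (H * G)⁻¹ (G x) := rfl
end

section
/- Let Ω have N elements, fix k ≥ 1 with 2k-1 ≤ N, and fix g, h with N-g, N-h even, g,h ≥ 1. The expected value over the uniform probability on E(g,h,N) of the fraction of Ω occupied by points in symmetric (2k-1)-cycles of H∘G equals ((2k-1)/N) · N^{underline(2k-1)} · #E(g-1,h-1,N-2k+1)/#E(g,h,N), where N^{underline(m)} = N(N-1)···(N-m+1). -/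
open Filter

/-- The orbit (cycle) of a point `x` under a permutation `L`. -/
def orb {N : ℕ} (L : Equiv.Perm (Fin N)) (x : Fin N) : Set (Fin N) :=
  {y | ∃ n : ℕ, (L ^ n) x = y}

/-- The number of points of `Fin N` lying on symmetric (i.e. `G`-invariant) cycles of
`L = H ∘ G` of length `t`. -/
noncomputable def symCount (N t : ℕ) (G H : Equiv.Perm (Fin N)) : ℕ :=
  Nat.card {x : Fin N |
    ⇑G '' orb (H * G) x = orb (H * G) x ∧ Nat.card (orb (H * G) x) = t}

/-! On a symmetric cycle of odd length `m` of `L = H * G`, the involution `G` reverses the cycle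
and so has exactly one fixed point on it. Labelling the cycle by `ZMod m`, starting at that point
and following `L`, makes `G` act as `j ↦ -j` and `H` as `j ↦ 1 - j`, and this labelling is unique.
So a pair `(G, H) ∈ E(g, h, N)` together with a point on a symmetric `m`-cycle amounts to an
embedding `ZMod m ↪ Fin N` (`N^{(m)}` choices), the label of the point (`m` choices), and a pair in
`E(g - 1, h - 1, N - m)` acting on the complement of the cycle. Hence the sum of the symmetric
counts over `E(g, h, N)` is `m · N^{(m)} · #E(g - 1, h - 1, N - m)`. -/

open Equiv Function Set

namespace ZMod

variable {m : ℕ}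

lemma isUnit_two_of_odd (hm : Odd m) : IsUnit (2 : ZMod m) := by
  exact_mod_cast (isUnit_iff_coprime 2 m).2 (Nat.coprime_two_left.2 hm)

lemma existsUnique_add_self_eq (hm : Odd m) (c : ZMod m) : ∃! j : ZMod m, j + j = c := by
  simpa only [Units.mulLeft_apply, IsUnit.unit_spec, two_mul] using
    (Units.mulLeft (isUnit_two_of_odd hm).unit).bijective.existsUnique c

lemma card_fixed_sub_eq_one (hm : Odd m) (c : ZMod m) :
    Nat.card {j : ZMod m // c - j = j} = 1 := by
  obtain ⟨j, hj, huniq⟩ := existsUnique_add_self_eq hm c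
  refine Nat.card_eq_one_iff_exists.2 ⟨⟨j, by rw [← hj, add_sub_cancel_right]⟩, fun i => ?_⟩
  exact Subtype.ext (huniq i (sub_eq_iff_eq_add.1 i.2).symm)

lemma card_fixed_neg_eq_one (hm : Odd m) : Nat.card {j : ZMod m // Equiv.neg _ j = j} = 1 := by
  simpa using card_fixed_sub_eq_one hm 0

end ZMod

section Orbit

variable {N m : ℕ} {L : Perm (Fin N)} {φ ψ : ZMod m → Fin N}

lemma pow_apply_of_step (hφ : ∀ j, L (φ j) = φ (j + 1)) (n : ℕ) (i : ZMod m) :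
    (L ^ n) (φ i) = φ (i + n) := by
  induction n with
  | zero => simp
  | succ n ih => rw [pow_succ', Perm.mul_apply, ih, hφ, Nat.cast_succ, add_assoc]

variable [NeZero m]

lemma pow_val_sub_apply_of_step (hφ : ∀ j, L (φ j) = φ (j + 1)) (i j : ZMod m) :
    (L ^ (j - i).val) (φ i) = φ j := by
  rw [pow_apply_of_step hφ, ZMod.natCast_zmod_val, add_sub_cancel]

lemma orb_eq_range_of_step (hφ : ∀ j, L (φ j) = φ (j + 1)) (i : ZMod m) :
    orb L (φ i) = range φ := by
  ext y
  constructor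
  · rintro ⟨n, rfl⟩
    exact ⟨_, (pow_apply_of_step hφ n i).symm⟩
  · rintro ⟨j, rfl⟩
    exact ⟨_, pow_val_sub_apply_of_step hφ i j⟩

lemma eq_of_step_of_apply_zero_eq (hφ : ∀ j, L (φ j) = φ (j + 1)) (hψ : ∀ j, L (ψ j) = ψ (j + 1))
    (h₀ : φ 0 = ψ 0) : φ = ψ := by
  ext1 j
  rw [← pow_val_sub_apply_of_step hφ 0 j, ← pow_val_sub_apply_of_step hψ 0 j, h₀]

lemma exists_embedding_of_card_orb {x : Fin N} (h : Nat.card (orb L x) = m) :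
    ∃ φ : ZMod m ↪ Fin N, φ 0 = x ∧ ∀ j, L (φ j) = φ (j + 1) := by
  set n := minimalPeriod L x
  have hn : NeZero n :=
    ⟨(minimalPeriod_pos_of_mem_periodicPts (L.injective.mem_periodicPts x)).ne'⟩
  let φ : ZMod n → Fin N := fun j => (L ^ j.val) x
  have hφ : ∀ j, L (φ j) = φ (j + 1) := fun j => by
    have hval : (j + 1).val = (j.val + 1) % n := by
      rw [← ZMod.val_natCast, Nat.cast_succ, ZMod.natCast_zmod_val]
    simp only [φ, hval, Perm.coe_pow]
    exact (iterate_succ_apply' _ _ _).symm.trans iterate_mod_minimalPeriod_eq.symm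
  have hφinj : Injective φ := fun i j hij => ZMod.val_injective n <| by
    simp only [φ, Perm.coe_pow] at hij
    exact iterate_injOn_Iio_minimalPeriod (ZMod.val_lt i) (ZMod.val_lt j) hij
  have hφ₀ : φ 0 = x := by simp [φ]
  have hnm : n = m := by
    rw [← h, ← hφ₀, orb_eq_range_of_step hφ, Nat.card_range_of_injective hφinj, Nat.card_zmod]
  subst hnm
  exact ⟨⟨φ, hφinj⟩, hφ₀, hφ⟩

end Orbit

section Extension

lemma card_fixed_permCongr {α β : Type*} (e : α ≃ β) (p : Perm α) :
    Nat.card {y // e.permCongr p y = y} = Nat.card {x // p x = x} :=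
  Nat.card_congr (e.subtypeEquiv fun x => by simp).symm

lemma card_fixed_sumCongr {α β : Type*} [Finite α] [Finite β] (a : Perm α) (b : Perm β) :
    Nat.card {z // a.sumCongr b z = z} = Nat.card {x // a x = x} + Nat.card {y // b y = y} := by
  rw [← Nat.card_sum]
  exact Nat.card_congr <| subtypeSum.trans <|
    sumCongr (subtypeEquivRight fun _ => by simp) (subtypeEquivRight fun _ => by simp)

variable {N m : ℕ} [NeZero m] (f : ZMod m ↪ Fin N)

open scoped Classical in
noncomputable def splitEquiv : ZMod m ⊕ Fin (N - m) ≃ Fin N :=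
  (sumCongr (ofInjective f f.injective) (Fintype.equivFinOfCardEq <| by
      rw [Fintype.card_compl_set, Set.card_range_of_injective f.injective, ZMod.card,
        Fintype.card_fin]).symm).trans
    (Set.sumCompl (range f))

lemma splitEquiv_inl (j : ZMod m) : splitEquiv f (.inl j) = f j := rfl

noncomputable def extendPerm (a : Perm (ZMod m)) (q : Perm (Fin (N - m))) : Perm (Fin N) :=
  (splitEquiv f).permCongr (a.sumCongr q)

variable {f} {a b : Perm (ZMod m)} {q r : Perm (Fin (N - m))}

lemma extendPerm_apply_embedding (j : ZMod m) : extendPerm f a q (f j) = f (a j) := by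
  rw [extendPerm, ← splitEquiv_inl, permCongr_apply, symm_apply_apply, Perm.sumCongr_apply,
    Sum.map_inl, splitEquiv_inl]

lemma extendPerm_mul : extendPerm f a q * extendPerm f b r = extendPerm f (a * b) (q * r) := by
  rw [extendPerm, extendPerm, extendPerm, ← permCongr_mul, Perm.sumCongr_mul]

lemma extendPerm_one : extendPerm f 1 1 = 1 := by
  rw [extendPerm, Perm.sumCongr_one]
  exact (splitEquiv f).permCongrHom.map_one

lemma extendPerm_injective : Injective (extendPerm f a) := fun q r h =>
  Equiv.ext fun v => by simpa using congr($((permCongr _).injective h) (.inr v))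

lemma extendPerm_mul_self_eq_one_iff (ha : a * a = 1) :
    extendPerm f a q * extendPerm f a q = 1 ↔ q * q = 1 := by
  rw [extendPerm_mul, ha, ← extendPerm_one (f := f), extendPerm_injective.eq_iff]

lemma fixCard_extendPerm :
    fixCard (extendPerm f a q) = Nat.card {j // a j = j} + fixCard q := by
  rw [fixCard, fixCard, extendPerm, card_fixed_permCongr, card_fixed_sumCongr]

lemma exists_eq_extendPerm {σ : Perm (Fin N)} (hσ : ∀ j, σ (f j) = f (a j)) :
    ∃ q, σ = extendPerm f a q := by
  set τ := (splitEquiv f).symm.permCongr σ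
  have hτ : ∀ j, τ (.inl j) = .inl (a j) := fun j => by
    rw [permCongr_apply, symm_symm, splitEquiv_inl, hσ, ← splitEquiv_inl, symm_apply_apply]
  obtain ⟨⟨a', q⟩, ha'q : a'.sumCongr q = τ⟩ :=
    Perm.mem_sumCongrHom_range_of_perm_mapsTo_inl (σ := τ)
      (by rintro _ ⟨j, rfl⟩; exact ⟨a j, (hτ j).symm⟩)
  have ha' : a' = a := by
    ext j
    simpa [hτ] using congr($ha'q (.inl j))
  refine ⟨q, ?_⟩
  rw [extendPerm, ← ha', ha'q]
  exact ((splitEquiv f).permCongr.apply_symm_apply σ).symm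

end Extension

section DihedralLabel

variable {N m : ℕ}

def IsSymCycle (G H : Perm (Fin N)) (t : ℕ) (x : Fin N) : Prop :=
  ⇑G '' orb (H * G) x = orb (H * G) x ∧ Nat.card (orb (H * G) x) = t

def IsDihedralLabel (f : ZMod m ↪ Fin N) (G H : Perm (Fin N)) : Prop :=
  (∀ j, G (f j) = f (-j)) ∧ ∀ j, H (f j) = f (1 - j)

noncomputable def dihedralPair [NeZero m] (f : ZMod m ↪ Fin N)
    (q : Perm (Fin (N - m)) × Perm (Fin (N - m))) : Perm (Fin N) × Perm (Fin N) :=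
  (extendPerm f (Equiv.neg _) q.1, extendPerm f (Equiv.subLeft 1) q.2)

variable {f f' : ZMod m ↪ Fin N} {G H : Perm (Fin N)}

lemma IsDihedralLabel.mul_apply (hf : IsDihedralLabel f G H) (j : ZMod m) :
    (H * G) (f j) = f (j + 1) := by
  rw [Perm.mul_apply, hf.1, hf.2, sub_neg_eq_add, add_comm]

variable [NeZero m]

namespace IsDihedralLabel

lemma orb_eq (hf : IsDihedralLabel f G H) (i : ZMod m) : orb (H * G) (f i) = range f :=
  orb_eq_range_of_step hf.mul_apply i

lemma isSymCycle (hf : IsDihedralLabel f G H) (i : ZMod m) : IsSymCycle G H m (f i) := by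
  refine ⟨?_, ?_⟩ <;> rw [hf.orb_eq]
  · rw [← range_comp, show ⇑G ∘ ⇑f = ⇑f ∘ Neg.neg from funext hf.1, neg_surjective.range_comp]
  · rw [Nat.card_range_of_injective f.injective, Nat.card_zmod]

/-- The labelling is pinned down by the unique fixed point of `G` on the cycle, at label `0`. -/
lemma eq_of_apply_eq (hm : Odd m) (hf : IsDihedralLabel f G H) (hf' : IsDihedralLabel f' G H)
    {i i' : ZMod m} (h : f i = f' i') : f = f' := by
  obtain ⟨j, hj⟩ : f' 0 ∈ range f := by
    rw [← hf.orb_eq i, h, hf'.orb_eq]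
    exact mem_range_self 0
  have hj₀ : j = 0 := by
    have hneg : -j = j := f.injective (by rw [← hf.1, hj, hf'.1, neg_zero])
    obtain ⟨_, -, huniq⟩ := ZMod.existsUnique_add_self_eq hm 0
    rw [huniq j (neg_eq_iff_add_eq_zero.1 hneg), huniq 0 (add_zero 0)]
  exact DFunLike.coe_injective <|
    eq_of_step_of_apply_zero_eq hf.mul_apply hf'.mul_apply (by rw [← hj, hj₀])

lemma exists_dihedralPair_eq (hf : IsDihedralLabel f G H) : ∃ q, dihedralPair f q = (G, H) := by
  obtain ⟨q₁, rfl⟩ := exists_eq_extendPerm (a := Equiv.neg _) hf.1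
  obtain ⟨q₂, rfl⟩ := exists_eq_extendPerm (a := Equiv.subLeft 1) hf.2
  exact ⟨(q₁, q₂), rfl⟩

end IsDihedralLabel

lemma exists_isDihedralLabel (hm : Odd m) (hG : G * G = 1) (hH : H * H = 1) {x : Fin N}
    (hx : IsSymCycle G H m x) :
    ∃ (f : ZMod m ↪ Fin N) (i : ZMod m), IsDihedralLabel f G H ∧ f i = x := by
  have hG' : ∀ y, G (G y) = y := fun y => by rw [← Perm.mul_apply, hG, Perm.one_apply]
  have hH' : ∀ y, H (H y) = y := fun y => by rw [← Perm.mul_apply, hH, Perm.one_apply]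
  obtain ⟨φ, hφ₀, hφ⟩ := exists_embedding_of_card_orb hx.2
  obtain ⟨c, hc⟩ : G x ∈ range φ := by
    rw [← orb_eq_range_of_step hφ 0, hφ₀, ← hx.1]
    exact mem_image_of_mem _ ⟨0, by rw [pow_zero, Perm.one_apply]⟩
  -- `G` reverses the cycle: `j ↦ G (φ (c - j))` is another parametrisation starting at `x`.
  have hrev : (fun j => G (φ (c - j))) = φ := by
    refine eq_of_step_of_apply_zero_eq (fun j => ?_) hφ (by simp only [sub_zero, hc, hG', hφ₀])
    rw [Perm.mul_apply, hG', show c - j = c - (j + 1) + 1 by ring, ← hφ, Perm.mul_apply, hH']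
  have hGφ : ∀ j, G (φ j) = φ (c - j) := fun j => by
    simpa only [sub_sub_cancel] using congr_fun hrev (c - j)
  obtain ⟨j₀, hj₀, -⟩ := ZMod.existsUnique_add_self_eq hm c
  refine ⟨(Equiv.addRight j₀).toEmbedding.trans φ, -j₀, ⟨fun j => ?_, fun j => ?_⟩, ?_⟩
  · change G (φ (j + j₀)) = φ (-j + j₀)
    rw [hGφ, ← hj₀]
    ring_nf
  · change H (φ (j + j₀)) = φ (1 - j + j₀)
    rw [← hG' (φ (j + j₀)), ← Perm.mul_apply, hGφ, hφ, ← hj₀]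
    ring_nf
  · change φ (-j₀ + j₀) = x
    rw [neg_add_cancel, hφ₀]

end DihedralLabel

section DihedralPair

variable {N m g h : ℕ} [NeZero m] (f : ZMod m ↪ Fin N)

lemma isDihedralLabel_dihedralPair (q : Perm (Fin (N - m)) × Perm (Fin (N - m))) :
    IsDihedralLabel f (dihedralPair f q).1 (dihedralPair f q).2 :=
  ⟨fun _ => extendPerm_apply_embedding _, fun _ => extendPerm_apply_embedding _⟩

lemma dihedralPair_injective : Injective (dihedralPair f) := fun _ _ h =>
  Prod.ext (extendPerm_injective congr($h.1)) (extendPerm_injective congr($h.2))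

lemma dihedralPair_mem_pairE_iff (hm : Odd m) (hg : 1 ≤ g) (hh : 1 ≤ h)
    (q : Perm (Fin (N - m)) × Perm (Fin (N - m))) :
    dihedralPair f q ∈ pairE g h N ↔ q ∈ pairE (g - 1) (h - 1) (N - m) := by
  have hneg : Equiv.neg (ZMod m) * Equiv.neg (ZMod m) = 1 := by ext; simp
  have hsub : Equiv.subLeft (1 : ZMod m) * Equiv.subLeft 1 = 1 := by ext; simp
  simp only [pairE, dihedralPair, mem_ofPred_eq, extendPerm_mul_self_eq_one_iff hneg,
    extendPerm_mul_self_eq_one_iff hsub, fixCard_extendPerm, ZMod.card_fixed_neg_eq_one hm,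
    Equiv.subLeft_apply, ZMod.card_fixed_sub_eq_one hm]
  constructor <;> rintro ⟨h₁, h₂, h₃, h₄⟩ <;> exact ⟨h₁, h₂, by omega, by omega⟩

end DihedralPair

section Counting

variable {N m g h : ℕ} [NeZero m]

noncomputable def dihedralCycleMap (hm : Odd m) (hg : 1 ≤ g) (hh : 1 ≤ h)
    (u : (ZMod m ↪ Fin N) × ZMod m × pairE (g - 1) (h - 1) (N - m)) :
    Σ p : pairE g h N, {x // IsSymCycle p.1.1 p.1.2 m x} :=
  ⟨⟨dihedralPair u.1 u.2.2, (dihedralPair_mem_pairE_iff u.1 hm hg hh _).2 u.2.2.2⟩,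
    u.1 u.2.1, (isDihedralLabel_dihedralPair u.1 _).isSymCycle _⟩

lemma dihedralCycleMap_bijective (hm : Odd m) (hg : 1 ≤ g) (hh : 1 ≤ h) :
    Bijective (dihedralCycleMap (N := N) hm hg hh) := by
  constructor
  · rintro ⟨f, i, q⟩ ⟨f', i', q'⟩ h
    have hp : dihedralPair f q = dihedralPair f' q' := congr($h.1.1)
    have hx : f i = f' i' := congr($h.2.1)
    obtain rfl : f = f' := (isDihedralLabel_dihedralPair f q).eq_of_apply_eq hm
      (hp ▸ isDihedralLabel_dihedralPair f' q') hx
    obtain rfl : i = i' := f.injective hx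
    obtain rfl : q = q' := Subtype.ext (dihedralPair_injective f hp)
    rfl
  · rintro ⟨⟨⟨G, H⟩, hp⟩, x, hx⟩
    obtain ⟨f, i, hf, rfl⟩ := exists_isDihedralLabel hm hp.1 hp.2.1 hx
    obtain ⟨q, hq⟩ := hf.exists_dihedralPair_eq
    exact ⟨⟨f, i, q, (dihedralPair_mem_pairE_iff f hm hg hh q).1 (hq ▸ hp)⟩,
      Sigma.subtype_ext (Subtype.ext hq) rfl⟩

lemma card_sigma_isSymCycle (hm : Odd m) (hg : 1 ≤ g) (hh : 1 ≤ h) :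
    Nat.card (Σ p : pairE g h N, {x // IsSymCycle p.1.1 p.1.2 m x}) =
      m * N.descFactorial m * Nat.card (pairE (g - 1) (h - 1) (N - m)) := by
  rw [← Nat.card_eq_of_bijective _ (dihedralCycleMap_bijective hm hg hh), Nat.card_prod,
    Nat.card_prod, Nat.card_zmod, Nat.card_eq_fintype_card (α := ZMod m ↪ Fin N),
    Fintype.card_embedding_eq, ZMod.card, Fintype.card_fin]
  ring

lemma finsum_symCount_eq_card_sigma (t : ℕ) :
    ∑ᶠ p ∈ pairE g h N, symCount N t p.1 p.2 =
      Nat.card (Σ p : pairE g h N, {x // IsSymCycle p.1.1 p.1.2 t x}) := by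
  classical
  rw [← finsum_set_coe_eq_finsum_mem, finsum_eq_sum_of_fintype, Nat.card_sigma]
  rfl

end Counting

theorem expected_symmetric_odd_fraction_general (N k g h : ℕ)
    (hk : 1 ≤ k)
    (hg : 1 ≤ g) (hh : 1 ≤ h) :
    (∑ᶠ p ∈ pairE g h N, (symCount N (2 * k - 1) p.1 p.2 : ℝ) / N) /
        (Nat.card (pairE g h N) : ℝ) =
      ((2 * k - 1 : ℝ) / N) * (N.descFactorial (2 * k - 1) : ℝ) *
        (Nat.card (pairE (g - 1) (h - 1) (N - (2 * k - 1))) : ℝ) /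
          (Nat.card (pairE g h N) : ℝ) := by
  have hm : Odd (2 * k - 1) := ⟨k - 1, by omega⟩
  have : NeZero (2 * k - 1) := ⟨hm.pos.ne'⟩
  have hsum : ∑ᶠ p ∈ pairE g h N, (symCount N (2 * k - 1) p.1 p.2 : ℝ) =
      (2 * k - 1 : ℝ) * N.descFactorial (2 * k - 1) *
        Nat.card (pairE (g - 1) (h - 1) (N - (2 * k - 1))) := by
    rw [← Nat.cast_finsum_mem (toFinite _), finsum_symCount_eq_card_sigma,
      card_sigma_isSymCycle hm hg hh]
    push_cast [Nat.cast_sub (by omega : 1 ≤ 2 * k)]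
    ring
  simp_rw [div_eq_mul_inv _ (N : ℝ)]
  rw [← finsum_mem_mul, hsum]
  ring

/-- The expected fraction of the space occupied by symmetric `(2k-1)`-cycles of `H ∘ G`
equals `((2k-1)/N)·N^{underline(2k-1)}·#E(g-1,h-1,N-2k+1)/#E(g,h,N)`. -/
theorem expected_symmetric_odd_fraction (N k g h : ℕ)
    (hk : 1 ≤ k) (hkN : 2 * k - 1 ≤ N)
    (hg : 1 ≤ g) (hh : 1 ≤ h)
    (heg : Even (N - g)) (heh : Even (N - h)) :
    (∑ᶠ p ∈ pairE g h N, (symCount N (2 * k - 1) p.1 p.2 : ℝ) / N) /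
        (Nat.card (pairE g h N) : ℝ) =
      ((2 * k - 1 : ℝ) / N) * (N.descFactorial (2 * k - 1) : ℝ) *
        (Nat.card (pairE (g - 1) (h - 1) (N - (2 * k - 1))) : ℝ) /
          (Nat.card (pairE g h N) : ℝ) :=
  expected_symmetric_odd_fraction_general N k g h hk hg hh
end
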